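/- Let A, B be real n×n matrices satisfying: (c1) A is entrywise nonnegative, (c2) B_{ij} ≤ A_{ij} for all i ≠ j, and (c3) there exists an entrywise positive vector u with (B−A)u entrywise positive. Set μ = ρ((B−A)⁻¹A) and ρ(A,B) = μ/(1+μ). Then for every real t with 0 < t < ρ(A,B), the matrix tB − A is not an M-matrix. -/

import Mathlib

open Matrix

/-- Spectral radius of a real matrix: supremum of the absolute values of its
complex eigenvalues. -/
noncomputable def specRad {m : Type*} [Fintype m] [DecidableEq m] (M : Matrix m m ℝ) : ℝ :=
  sSup ((fun z : ℂ => ‖z‖) '' spectrum ℂ (M.map (algebraMap ℝ ℂ)))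

/-- Principal submatrix of `A` with rows and columns indexed by `J`. -/
def subm {n : ℕ} (A : Matrix (Fin n) (Fin n) ℝ) (J : Finset (Fin n)) :
    Matrix {i // i ∈ J} {i // i ∈ J} ℝ :=
  A.submatrix Subtype.val Subtype.val

/-- `X` is an M-matrix: `X = q•I − P` with `P ≥ 0` and `q ≥ ρ(P)`. -/
def IsMMatrix {m : Type*} [Fintype m] [DecidableEq m] (X : Matrix m m ℝ) : Prop :=
  ∃ q : ℝ, ∃ P : Matrix m m ℝ, (∀ i j, 0 ≤ P i j) ∧ X = q • 1 - P ∧ specRad P ≤ q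

/-- `X` is a nonsingular M-matrix: `X = q•I − P` with `P ≥ 0` and `q > ρ(P)`. -/
def IsNonsingMMatrix {m : Type*} [Fintype m] [DecidableEq m] (X : Matrix m m ℝ) : Prop :=
  ∃ q : ℝ, ∃ P : Matrix m m ℝ, (∀ i j, 0 ≤ P i j) ∧ X = q • 1 - P ∧ specRad P < q

/-!
Put `M = B - A`. It is a Z-matrix with `M u > 0`, so `M⁻¹ ≥ 0` and `C = M⁻¹ A ≥ 0`; weak
Perron–Frobenius gives `x ≥ 0`, `x ≠ 0` with `C x ≥ μ x`. Write `t B - A = t M - (1 - t) A`; the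
hypothesis `t < μ / (1 + μ)` says `(1 - t) μ / t > 1`, so for small `c > 0` the vector
`z = (t M + c I)⁻¹ (1 - t) A x` still dominates `x`, whence `(t B - A + c I) z ≤ 0`. If
`t B - A = q I - P` with `P ≥ 0`, this reads `P z ≥ (q + c) z`, and the Collatz–Wielandt bound
gives `ρ(P) ≥ q + c > q`.
-/

open Filter Topology

lemma eventually_forall_mul_le_of_pos {ι : Type*} [Finite ι] (a b : ι → ℝ) :
    ∀ᶠ c in 𝓝 (0 : ℝ), ∀ i, 0 < a i → c * b i ≤ a i := by
  refine eventually_all.2 fun i => ?_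
  by_cases ha : 0 < a i
  · have hlim : Tendsto (fun c : ℝ => c * b i) (𝓝 0) (𝓝 0) :=
      (continuous_mul_const (b i)).tendsto' 0 0 (zero_mul _)
    filter_upwards [hlim.eventually (eventually_le_nhds ha)] with c hc using fun _ => hc
  · exact Eventually.of_forall fun c h => absurd h ha

lemma ofReal_le_spectralRadius_of_mul_pow_le_norm_pow {A : Type*} [NormedRing A]
    [NormedAlgebra ℂ A] [CompleteSpace A] {a : A} {c r : ℝ} (hc : 0 < c) (hr : 0 ≤ r)
    (h : ∀ k : ℕ, c * r ^ k ≤ ‖a ^ k‖) : ENNReal.ofReal r ≤ spectralRadius ℂ a := by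
  have hlow : Tendsto (fun k : ℕ => ENNReal.ofReal (c ^ (1 / k : ℝ) * r)) atTop
      (𝓝 (ENNReal.ofReal r)) := by
    have hroot := ((Real.continuousAt_const_rpow hc.ne').tendsto.comp
      tendsto_one_div_atTop_nhds_zero_nat).mul_const r
    simpa using ENNReal.tendsto_ofReal hroot
  refine le_of_tendsto_of_tendsto hlow
    (spectrum.pow_norm_pow_one_div_tendsto_nhds_spectralRadius a) ?_
  filter_upwards [eventually_ge_atTop 1] with k hk
  refine ENNReal.ofReal_le_ofReal ?_
  calc c ^ (1 / k : ℝ) * r = (c * r ^ k) ^ (1 / k : ℝ) := by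
        rw [Real.mul_rpow hc.le (by positivity), one_div,
          Real.pow_rpow_inv_natCast hr (by omega)]
    _ ≤ ‖a ^ k‖ ^ (1 / k : ℝ) := Real.rpow_le_rpow (by positivity) (h k) (by positivity)

namespace Matrix

variable {ι : Type*} [Fintype ι]

section Nonneg

variable {S T : Matrix ι ι ℝ}

lemma mulVec_nonneg_of_nonneg (hS : ∀ i j, 0 ≤ S i j) {x : ι → ℝ} (hx : 0 ≤ x) :
    0 ≤ S *ᵥ x :=
  fun i => Finset.sum_nonneg fun j _ => mul_nonneg (hS i j) (hx j)

lemma mulVec_mono_of_nonneg (hS : ∀ i j, 0 ≤ S i j) {x y : ι → ℝ} (hxy : x ≤ y) :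
    S *ᵥ x ≤ S *ᵥ y := by
  rw [← sub_nonneg, ← mulVec_sub]
  exact mulVec_nonneg_of_nonneg hS (sub_nonneg.2 hxy)

lemma mul_nonneg_of_nonneg (hS : ∀ i j, 0 ≤ S i j) (hT : ∀ i j, 0 ≤ T i j) :
    ∀ i j, 0 ≤ (S * T) i j :=
  fun i j => Finset.sum_nonneg fun k _ => mul_nonneg (hS i k) (hT k j)

lemma pow_nonneg_of_nonneg [DecidableEq ι] (hS : ∀ i j, 0 ≤ S i j) (k : ℕ) :
    ∀ i j, 0 ≤ (S ^ k) i j := by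
  induction k with
  | zero => intro i j; rw [pow_zero, one_apply]; split_ifs <;> norm_num
  | succ k ih => rw [pow_succ]; exact mul_nonneg_of_nonneg ih hS

end Nonneg

/-- These are exactly the nonsingular M-matrices. -/
structure IsSemipositiveZMatrix (N : Matrix ι ι ℝ) : Prop where
  offDiag_nonpos : ∀ i j, i ≠ j → N i j ≤ 0
  exists_pos : ∃ u : ι → ℝ, (∀ i, 0 < u i) ∧ ∀ i, 0 < (N *ᵥ u) i

namespace IsSemipositiveZMatrix

variable {N : Matrix ι ι ℝ}

/-- If `x` had a negative entry, `N *ᵥ x` would be negative at an entry minimising `x / u`. -/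
lemma nonneg_of_mulVec_nonneg (hN : IsSemipositiveZMatrix N) {x : ι → ℝ}
    (hx : 0 ≤ N *ᵥ x) : 0 ≤ x := by
  obtain ⟨u, hu, hNu⟩ := hN.exists_pos
  by_contra hneg
  obtain ⟨i₀, hi₀⟩ : ∃ i, x i < 0 := by simpa [Pi.le_def] using hneg
  obtain ⟨k, -, hk⟩ := Finset.exists_min_image Finset.univ (fun i => x i / u i)
    ⟨i₀, Finset.mem_univ _⟩
  set m := x k / u k
  have hm : m < 0 := (hk i₀ (Finset.mem_univ _)).trans_lt (div_neg_of_neg_of_pos hi₀ (hu i₀))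
  have hmu : ∀ j, m * u j ≤ x j := fun j =>
    (le_div_iff₀ (hu j)).1 (hk j (Finset.mem_univ _))
  have hle : (N *ᵥ x) k ≤ m * (N *ᵥ u) k := by
    simp only [mulVec, dotProduct, Finset.mul_sum]
    refine Finset.sum_le_sum fun j _ => ?_
    rcases eq_or_ne j k with rfl | hjk
    · have hmj : m * u j = x j := div_mul_cancel₀ (x j) (hu j).ne'
      exact (by rw [← hmj]; ring : N j j * x j = m * (N j j * u j)).le
    · nlinarith [hN.offDiag_nonpos k j hjk.symm, hmu j]
  have hxk : 0 ≤ (N *ᵥ x) k := hx k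
  linarith [mul_neg_of_neg_of_pos hm (hNu k)]

lemma smul (hN : IsSemipositiveZMatrix N) {t : ℝ} (ht : 0 < t) :
    IsSemipositiveZMatrix (t • N) := by
  obtain ⟨u, hu, hNu⟩ := hN.exists_pos
  refine ⟨fun i j hij => ?_, u, hu, fun i => ?_⟩
  · simpa using mul_nonpos_of_nonneg_of_nonpos ht.le (hN.offDiag_nonpos i j hij)
  · simpa [smul_mulVec] using mul_pos ht (hNu i)

variable [DecidableEq ι]

lemma isUnit_det (hN : IsSemipositiveZMatrix N) : IsUnit N.det := by
  rw [isUnit_iff_ne_zero]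
  intro hdet
  obtain ⟨v, hv0, hv⟩ := exists_mulVec_eq_zero_iff.2 hdet
  have hpos : 0 ≤ v := hN.nonneg_of_mulVec_nonneg (by rw [hv])
  have hneg : 0 ≤ -v := hN.nonneg_of_mulVec_nonneg (by rw [mulVec_neg, hv, neg_zero])
  exact hv0 (le_antisymm (neg_nonneg.1 hneg) hpos)

lemma inv_nonneg (hN : IsSemipositiveZMatrix N) : ∀ i j, 0 ≤ N⁻¹ i j := by
  intro i j
  have h : 0 ≤ N⁻¹ *ᵥ Pi.single j 1 := hN.nonneg_of_mulVec_nonneg <| by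
    rw [mulVec_mulVec, mul_nonsing_inv N hN.isUnit_det, one_mulVec]
    exact Pi.single_nonneg.2 zero_le_one
  simpa using h i

lemma add_smul_one (hN : IsSemipositiveZMatrix N) {c : ℝ} (hc : 0 ≤ c) :
    IsSemipositiveZMatrix (N + c • 1) := by
  obtain ⟨u, hu, hNu⟩ := hN.exists_pos
  refine ⟨fun i j hij => ?_, u, hu, fun i => ?_⟩
  · simpa [one_apply_ne hij] using hN.offDiag_nonpos i j hij
  · simpa [add_mulVec, smul_mulVec] using
      add_pos_of_pos_of_nonneg (hNu i) (mul_nonneg hc (hu i).le)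

/-- For small `c > 0`, `z = (N + c • 1)⁻¹ R x` still dominates `x`: the resolvent identity
`N⁻¹ R x - z = c • N⁻¹ z` costs only `O(c)`, and `z ≥ 0` covers the zero entries of `x`. -/
lemma exists_le_mulVec_sub_add_smul_one_nonpos (hN : IsSemipositiveZMatrix N)
    {R : Matrix ι ι ℝ} (hR : ∀ i j, 0 ≤ R i j) {θ : ℝ} (hθ : 1 < θ) {x : ι → ℝ} (hx : 0 ≤ x)
    (hθx : θ • x ≤ (N⁻¹ * R) *ᵥ x) :
    ∃ c : ℝ, 0 < c ∧ ∃ z, x ≤ z ∧ (N - R + c • 1) *ᵥ z ≤ 0 := by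
  set w := N⁻¹ *ᵥ (R *ᵥ x)
  obtain ⟨c, hsmall, hc⟩ :=
    (((eventually_forall_mul_le_of_pos ((θ - 1) • x) (N⁻¹ *ᵥ w)).filter_mono
      nhdsWithin_le_nhds).and (self_mem_nhdsWithin : ∀ᶠ c in 𝓝[>] (0 : ℝ), 0 < c)).exists
  have hNc := hN.add_smul_one hc.le
  set z := (N + c • 1)⁻¹ *ᵥ (R *ᵥ x)
  have hRx : 0 ≤ R *ᵥ x := mulVec_nonneg_of_nonneg hR hx
  have hz : 0 ≤ z := mulVec_nonneg_of_nonneg hNc.inv_nonneg hRx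
  have hNw : N *ᵥ w = R *ᵥ x := by
    rw [mulVec_mulVec, mul_nonsing_inv _ hN.isUnit_det, one_mulVec]
  have hNcz : (N + c • 1) *ᵥ z = R *ᵥ x := by
    rw [mulVec_mulVec, mul_nonsing_inv _ hNc.isUnit_det, one_mulVec]
  have hwz : w - z = c • (N⁻¹ *ᵥ z) := by
    have hN_wz : N *ᵥ (w - z) = c • z := by
      rw [add_mulVec, smul_mulVec, one_mulVec] at hNcz
      rw [mulVec_sub, hNw, ← hNcz]
      abel
    rw [← mulVec_smul, ← hN_wz, mulVec_mulVec, nonsing_inv_mul _ hN.isUnit_det, one_mulVec]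
  have hNz : N⁻¹ *ᵥ z ≤ N⁻¹ *ᵥ w := mulVec_mono_of_nonneg hN.inv_nonneg <|
    sub_nonneg.1 (hwz ▸ smul_nonneg hc.le (mulVec_nonneg_of_nonneg hN.inv_nonneg hz))
  have hxz : x ≤ z := by
    intro i
    rcases (hx i).eq_or_lt with hxi | hxi
    · rw [← hxi]; exact hz i
    have hci := hsmall i (by simpa using mul_pos (sub_pos.2 hθ) hxi)
    have hθi : θ * x i ≤ w i := by simpa [w, mulVec_mulVec] using hθx i
    have hwzi := congrFun hwz i
    simp only [Pi.sub_apply, Pi.smul_apply, smul_eq_mul] at hci hwzi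
    nlinarith [hNz i]
  refine ⟨c, hc, z, hxz, ?_⟩
  rw [show N - R + c • 1 = (N + c • 1) - R by abel, sub_mulVec, hNcz, sub_nonpos]
  exact mulVec_mono_of_nonneg hR hxz

end IsSemipositiveZMatrix

end Matrix

section SpectralRadius

variable {ι : Type*} [Fintype ι] [DecidableEq ι]

lemma specRad_nonneg (S : Matrix ι ι ℝ) : 0 ≤ specRad S :=
  Real.sSup_nonneg <| by rintro _ ⟨z, -, rfl⟩; exact norm_nonneg z

lemma nonempty_of_specRad_pos {S : Matrix ι ι ℝ} (hS : 0 < specRad S) : Nonempty ι := by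
  rw [← not_isEmpty_iff]
  intro
  simp [specRad] at hS

lemma norm_le_specRad {S : Matrix ι ι ℝ} {z : ℂ}
    (hz : z ∈ spectrum ℂ (S.map (algebraMap ℝ ℂ))) : ‖z‖ ≤ specRad S :=
  le_csSup ((finite_spectrum _).image _).bddAbove ⟨z, hz, rfl⟩

lemma spectralRadius_le_ofReal_specRad (S : Matrix ι ι ℝ) :
    spectralRadius ℂ (S.map (algebraMap ℝ ℂ)) ≤ ENNReal.ofReal (specRad S) :=
  iSup₂_le fun z hz => by
    rw [← ENNReal.ofReal_coe_nnreal, coe_nnnorm]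
    exact ENNReal.ofReal_le_ofReal (norm_le_specRad hz)

attribute [local instance] Matrix.linftyOpNormedRing Matrix.linftyOpNormedAlgebra

lemma exists_norm_eq_specRad [Nonempty ι] (S : Matrix ι ι ℝ) :
    ∃ z ∈ spectrum ℂ (S.map (algebraMap ℝ ℂ)), ‖z‖ = specRad S :=
  Set.Nonempty.csSup_mem ((spectrum.nonempty _).image _) ((finite_spectrum _).image _)

/-- Weak Perron–Frobenius: take the entrywise modulus of an eigenvector for an eigenvalue of
maximal modulus. -/
lemma exists_nonneg_smul_specRad_le_mulVec [Nonempty ι] {S : Matrix ι ι ℝ}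
    (hS : ∀ i j, 0 ≤ S i j) :
    ∃ x : ι → ℝ, 0 ≤ x ∧ x ≠ 0 ∧ specRad S • x ≤ S *ᵥ x := by
  obtain ⟨z, hz, hzS⟩ := exists_norm_eq_specRad S
  rw [← spectrum_toLin', ← Module.End.hasEigenvalue_iff_mem_spectrum] at hz
  obtain ⟨v, hv⟩ := hz.exists_hasEigenvector
  have hSv : S.map (algebraMap ℝ ℂ) *ᵥ v = z • v := by simpa using hv.apply_eq_smul
  refine ⟨fun i => ‖v i‖, fun i => norm_nonneg _, fun h => hv.2 ?_, fun i => ?_⟩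
  · funext i; simpa using congrFun h i
  calc specRad S * ‖v i‖ = ‖(S.map (algebraMap ℝ ℂ) *ᵥ v) i‖ := by
        rw [hSv, Pi.smul_apply, smul_eq_mul, norm_mul, hzS]
    _ ≤ ∑ j, ‖(S i j : ℂ) * v j‖ := norm_sum_le _ _
    _ = (S *ᵥ fun j => ‖v j‖) i := by simp [mulVec, dotProduct, abs_of_nonneg (hS i _)]

/-- Collatz–Wielandt bound: the iterates `S ^ k *ᵥ x ≥ r ^ k • x` bound `‖S ^ k‖` from below,
and Gelfand's formula turns this into a bound on the spectral radius. -/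
lemma le_specRad_of_smul_le_mulVec {S : Matrix ι ι ℝ} (hS : ∀ i j, 0 ≤ S i j) {r : ℝ}
    {x : ι → ℝ} (hx : 0 ≤ x) (hx0 : x ≠ 0) (hSx : r • x ≤ S *ᵥ x) : r ≤ specRad S := by
  rcases le_or_gt r 0 with hr | hr
  · exact hr.trans (specRad_nonneg S)
  obtain ⟨i, hi⟩ : ∃ i, 0 < x i := by
    by_contra! h
    exact hx0 (le_antisymm h hx)
  have hpow : ∀ k : ℕ, r ^ k • x ≤ (S ^ k) *ᵥ x := by
    intro k
    induction k with
    | zero => simp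
    | succ k ih =>
      calc r ^ (k + 1) • x = r • (r ^ k • x) := by rw [pow_succ', mul_smul]
        _ ≤ r • ((S ^ k) *ᵥ x) := smul_le_smul_of_nonneg_left ih hr.le
        _ = (S ^ k) *ᵥ (r • x) := (mulVec_smul _ _ _).symm
        _ ≤ (S ^ k) *ᵥ (S *ᵥ x) := mulVec_mono_of_nonneg (pow_nonneg_of_nonneg hS k) hSx
        _ = (S ^ (k + 1)) *ᵥ x := by rw [mulVec_mulVec, pow_succ]
  set xc : ι → ℂ := algebraMap ℝ ℂ ∘ x
  have hxc : 0 < ‖xc‖ := norm_pos_iff.2 fun h => by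
    simpa [xc, hi.ne'] using congrFun h i
  have hnorm : ∀ k : ℕ, x i / ‖xc‖ * r ^ k ≤ ‖S.map (algebraMap ℝ ℂ) ^ k‖ := by
    intro k
    rw [div_mul_eq_mul_div, div_le_iff₀ hxc, ← Matrix.map_pow]
    calc x i * r ^ k ≤ ((S ^ k) *ᵥ x) i := by simpa [mul_comm] using hpow k i
      _ = ‖((S ^ k).map (algebraMap ℝ ℂ) *ᵥ xc) i‖ := by
        rw [← RingHom.map_mulVec, Complex.coe_algebraMap, Complex.norm_real, Real.norm_eq_abs,
          abs_of_nonneg]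
        exact mulVec_nonneg_of_nonneg (pow_nonneg_of_nonneg hS k) hx i
      _ ≤ ‖(S ^ k).map (algebraMap ℝ ℂ) *ᵥ xc‖ := norm_le_pi_norm _ i
      _ ≤ ‖(S ^ k).map (algebraMap ℝ ℂ)‖ * ‖xc‖ := linfty_opNorm_mulVec _ _
  have hρ := ofReal_le_spectralRadius_of_mul_pow_le_norm_pow (div_pos hi hxc) hr.le hnorm
  exact (ENNReal.ofReal_le_ofReal_iff (specRad_nonneg S)).1
    (hρ.trans (spectralRadius_le_ofReal_specRad S))

lemma IsMMatrix.not_add_smul_one_mulVec_nonpos {X : Matrix ι ι ℝ} (hX : IsMMatrix X) {c : ℝ}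
    (hc : 0 < c) {z : ι → ℝ} (hz : 0 ≤ z) (hz0 : z ≠ 0) : ¬ (X + c • 1) *ᵥ z ≤ 0 := by
  obtain ⟨q, P, hP, rfl, hPq⟩ := hX
  intro hXz
  have hPz : (q + c) • z ≤ P *ᵥ z := by
    simpa [sub_mulVec, add_mulVec, add_smul, smul_mulVec, sub_add_eq_add_sub] using hXz
  linarith [le_specRad_of_smul_le_mulVec hP hz hz0 hPz]

end SpectralRadius

/-- Under (c1)–(c3), for every `t` with `0 < t < ρ(A,B)`, the matrix `tB − A`
is not an M-matrix. -/
theorem stmt_7 {n : ℕ} (A B : Matrix (Fin n) (Fin n) ℝ)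
    (hc1 : ∀ i j, 0 ≤ A i j)
    (hc2 : ∀ i j, i ≠ j → B i j ≤ A i j)
    (hc3 : ∃ u : Fin n → ℝ, (∀ i, 0 < u i) ∧ ∀ i, 0 < (B - A).mulVec u i)
    (μ ρAB : ℝ) (hμ : μ = specRad ((B - A)⁻¹ * A)) (hρ : ρAB = μ / (1 + μ)) :
    ∀ t : ℝ, 0 < t → t < ρAB → ¬ IsMMatrix (t • B - A) := by
  rintro t ht htρ hX
  have hM : IsSemipositiveZMatrix (B - A) := ⟨fun i j hij => sub_nonpos.2 (hc2 i j hij), hc3⟩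
  have hμ0 : 0 ≤ μ := hμ ▸ specRad_nonneg _
  have hgap : t < (1 - t) * μ := by
    rw [hρ, lt_div_iff₀ (by linarith)] at htρ
    linarith
  have ht1 : t < 1 := by nlinarith
  have : Nonempty (Fin n) := nonempty_of_specRad_pos (hμ ▸ (by nlinarith : 0 < μ))
  obtain ⟨x, hx, hx0, hCx⟩ :=
    exists_nonneg_smul_specRad_le_mulVec (mul_nonneg_of_nonneg hM.inv_nonneg hc1)
  have hθx : ((1 - t) * μ / t) • x ≤ ((t • (B - A))⁻¹ * ((1 - t) • A)) *ᵥ x := by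
    have hinv : (t • (B - A))⁻¹ = t⁻¹ • (B - A)⁻¹ :=
      inv_smul' _ (Units.mk0 t ht.ne') hM.isUnit_det
    calc ((1 - t) * μ / t) • x = ((1 - t) / t) • (μ • x) := by rw [smul_smul, mul_div_right_comm]
      _ ≤ ((1 - t) / t) • (((B - A)⁻¹ * A) *ᵥ x) :=
        smul_le_smul_of_nonneg_left (hμ ▸ hCx) (div_nonneg (by linarith) ht.le)
      _ = _ := by rw [hinv, smul_mul_smul, smul_mulVec, inv_mul_eq_div]
  obtain ⟨c, hc, z, hxz, hz⟩ := (hM.smul ht).exists_le_mulVec_sub_add_smul_one_nonpos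
    (R := (1 - t) • A) (fun i j => mul_nonneg (by linarith) (hc1 i j)) ((one_lt_div ht).2 hgap)
    hx hθx
  refine hX.not_add_smul_one_mulVec_nonpos hc (hx.trans hxz)
    (fun h => hx0 (le_antisymm (h ▸ hxz) hx)) ?_
  rwa [show t • B - A = t • (B - A) - (1 - t) • A by module]
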